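/- Let f(z) = ∑_{k≥0} aₖ zᵏ be a power series with nonnegative coefficients aₖ ≥ 0 and radius of convergence R > 0. If Z = [zᵢⱼ] ∈ ℝ^{n×n} is symmetric positive semi-definite with |zᵢⱼ| < R for all i,j, then the matrix [f(zᵢⱼ)] obtained by applying f entrywise is symmetric positive semi-definite. -/

import Mathlib

/-!
The entrywise powers `Z.map (· ^ k)` are iterated Hadamard products of `Z` with itself, starting
from the all-ones matrix, so they are positive semidefinite by the Schur product theorem. The matrix
`[f(zᵢⱼ)]` is the entrywise sum of the series `∑ aₖ • Z.map (· ^ k)` of positive semidefinite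
matrices, and the quadratic forms `x ↦ x⋆ M x` pass to the limit.
-/

open scoped ComplexOrder

namespace Matrix

variable {𝕜 ι : Type*} [RCLike 𝕜] [Fintype ι]

theorem PosSemidef.map_pow {A : Matrix ι ι 𝕜} (hA : A.PosSemidef) (k : ℕ) :
    (A.map (· ^ k)).PosSemidef := by
  induction k with
  | zero =>
    simpa [vecMulVec, Matrix.map] using posSemidef_vecMulVec_self_star (fun _ : ι => (1 : 𝕜))
  | succ k ih =>
    have hsucc : A.map (· ^ (k + 1)) = A.map (· ^ k) ⊙ A := by
      ext i j
      simp [pow_succ]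
    rw [hsucc]
    exact ih.hadamard hA

end Matrix

open Matrix in
theorem HasSum.posSemidef {𝕜 ι κ : Type*} [RCLike 𝕜] [Fintype ι] {A : κ → Matrix ι ι 𝕜}
    {M : Matrix ι ι 𝕜} (h : HasSum A M) (hA : ∀ k, (A k).PosSemidef) : M.PosSemidef := by
  rw [posSemidef_iff_dotProduct_mulVec]
  constructor
  · have hA_herm : (fun k => (A k)ᴴ) = A := funext fun k => (hA k).isHermitian
    exact (hA_herm ▸ h.matrix_conjTranspose).unique h
  · intro x
    let q : Matrix ι ι 𝕜 →+ 𝕜 := AddMonoidHom.mk' (fun M => Star.star x ⬝ᵥ M *ᵥ x)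
      fun M N => by simp [add_mulVec, dotProduct_add]
    have hq : Continuous q :=
      continuous_const.dotProduct (continuous_id.matrix_mulVec continuous_const)
    exact (h.map q hq).nonneg fun k => (hA k).dotProduct_mulVec_nonneg x

theorem entrywise_power_series_posSemidef_general {n : ℕ} (a : ℕ → ℝ) (R : ℝ)
    (ha : ∀ k, 0 ≤ a k)
    (hconv : ∀ x : ℝ, |x| < R → Summable (fun k => a k * x ^ k))
    (Z : Matrix (Fin n) (Fin n) ℝ) (hZ : Z.PosSemidef)
    (hbound : ∀ i j, |Z i j| < R) :
    (Matrix.of fun i j => ∑' k, a k * (Z i j) ^ k).PosSemidef := by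
  have hseries : HasSum (fun k => a k • Z.map (· ^ k))
      (Matrix.of fun i j => ∑' k, a k * (Z i j) ^ k) :=
    Pi.hasSum.mpr fun i => Pi.hasSum.mpr fun j => (hconv _ (hbound i j)).hasSum
  exact hseries.posSemidef fun k => (hZ.map_pow k).smul (ha k)

theorem entrywise_power_series_posSemidef {n : ℕ} (a : ℕ → ℝ) (R : ℝ)
    (hR : 0 < R) (ha : ∀ k, 0 ≤ a k)
    (hconv : ∀ x : ℝ, |x| < R → Summable (fun k => a k * x ^ k))
    (Z : Matrix (Fin n) (Fin n) ℝ) (hZ : Z.PosSemidef)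
    (hbound : ∀ i j, |Z i j| < R) :
    (Matrix.of fun i j => ∑' k, a k * (Z i j) ^ k).PosSemidef :=
  entrywise_power_series_posSemidef_general a R ha hconv Z hZ hbound
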